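/- arXiv:0906.5451 — 4 statements merged into one kernel-verified Lean document; each statement's English description precedes it below -/
import Mathlib

section
/- Let F : S² → ℝ be a smooth positive function on the unit sphere S² of ℝ³, and let Σ_F = { (F(u)·u, F(u)) : u ∈ S² } ⊆ ℝ³ × ℝ be the corresponding radial graph lying on the future light cone region { t = |x| } of Minkowski space. Then Σ_F is acausal: for every continuously differentiable path γ = (x, t) : [0,1] → ℝ³ × ℝ such that γ′(τ) ≠ 0 for all τ ∈ [0,1], ‖x′(τ)‖ ≤ |t′(τ)| for all τ ∈ [0,1], and γ(0) ∈ Σ_F, γ(1) ∈ Σ_F, one has γ(0) = γ(1). In other words, no two distinct points of Σ_F can be joined by a timelike or null path. -/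
open Set

/-- The radial-graph surface `S_F = {(F(u)•u, F(u)) : u ∈ S²}` lying on the cone
`{t = |x|}` of Minkowski space `ℝ³ × ℝ` is acausal: no two of its points can be
joined by a timelike or null (causal) C¹ path. -/
theorem radial_graph_on_lightcone_acausal
    (F : EuclideanSpace ℝ (Fin 3) → ℝ)
    (hFsmooth : ContDiff ℝ (⊤ : ℕ∞) F)
    (hFpos : ∀ u ∈ Metric.sphere (0 : EuclideanSpace ℝ (Fin 3)) 1, 0 < F u)
    (S : Set (EuclideanSpace ℝ (Fin 3) × ℝ))
    (hS : S = {p | ∃ u ∈ Metric.sphere (0 : EuclideanSpace ℝ (Fin 3)) 1,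
        p = (F u • u, F u)})
    (γ : ℝ → EuclideanSpace ℝ (Fin 3) × ℝ)
    (γ' : ℝ → EuclideanSpace ℝ (Fin 3) × ℝ)
    (hderiv : ∀ τ ∈ Icc (0 : ℝ) 1, HasDerivAt γ (γ' τ) τ)
    (hcont : ContinuousOn γ' (Icc 0 1))
    (hne : ∀ τ ∈ Icc (0 : ℝ) 1, γ' τ ≠ 0)
    (hcausal : ∀ τ ∈ Icc (0 : ℝ) 1, ‖(γ' τ).1‖ ≤ |(γ' τ).2|)
    (h0 : γ 0 ∈ S) (h1 : γ 1 ∈ S) :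
    γ 0 = γ 1 := by
  have h01 : (0 : ℝ) ≤ 1 := zero_le_one
  -- component derivatives
  have hx' : ∀ τ ∈ Icc (0 : ℝ) 1, HasDerivAt (fun s => (γ s).1) (γ' τ).1 τ := fun τ hτ =>
    (ContinuousLinearMap.fst ℝ (EuclideanSpace ℝ (Fin 3)) ℝ).hasFDerivAt.comp_hasDerivAt τ
      (hderiv τ hτ)
  have ht' : ∀ τ ∈ Icc (0 : ℝ) 1, HasDerivAt (fun s => (γ s).2) (γ' τ).2 τ := fun τ hτ =>
    (ContinuousLinearMap.snd ℝ (EuclideanSpace ℝ (Fin 3)) ℝ).hasFDerivAt.comp_hasDerivAt τ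
      (hderiv τ hτ)
  -- the time-derivative never vanishes
  have htne : ∀ τ ∈ Icc (0 : ℝ) 1, (γ' τ).2 ≠ 0 := by
    intro τ hτ h
    apply hne τ hτ
    have hx0 : (γ' τ).1 = 0 := by
      have h' := hcausal τ hτ
      rw [h, abs_zero] at h'
      exact norm_le_zero_iff.mp h'
    exact Prod.ext hx0 h
  have htcont : ContinuousOn (fun τ => (γ' τ).2) (Icc 0 1) :=
    continuous_snd.comp_continuousOn hcont
  have hxcont : ContinuousOn (fun τ => (γ' τ).1) (Icc 0 1) :=
    continuous_fst.comp_continuousOn hcont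
  -- the time-derivative has constant sign
  have hsign : (∀ τ ∈ Icc (0 : ℝ) 1, 0 < (γ' τ).2) ∨ (∀ τ ∈ Icc (0 : ℝ) 1, (γ' τ).2 < 0) := by
    by_contra hcon
    push_neg at hcon
    obtain ⟨⟨a, ha, ha'⟩, b, hb, hb'⟩ := hcon
    have ha2 : (γ' a).2 < 0 := lt_of_le_of_ne ha' (htne a ha)
    have hb2 : 0 < (γ' b).2 := lt_of_le_of_ne hb' (Ne.symm (htne b hb))
    have hsub : uIcc a b ⊆ Icc (0 : ℝ) 1 := uIcc_subset_Icc ha hb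
    have hcc : ContinuousOn (fun τ => (γ' τ).2) (uIcc a b) := htcont.mono hsub
    have h0mem : (0 : ℝ) ∈ uIcc ((γ' a).2) ((γ' b).2) := by
      rw [mem_uIcc]; exact Or.inl ⟨ha2.le, hb2.le⟩
    obtain ⟨c, hc, hc0⟩ := intermediate_value_uIcc hcc h0mem
    exact htne c (hsub hc) hc0
  -- integrability
  have hxint : IntervalIntegrable (fun τ => (γ' τ).1) MeasureTheory.volume 0 1 :=
    hxcont.intervalIntegrable_of_Icc h01
  have htint : IntervalIntegrable (fun τ => (γ' τ).2) MeasureTheory.volume 0 1 :=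
    htcont.intervalIntegrable_of_Icc h01
  have hnormint : IntervalIntegrable (fun τ => ‖(γ' τ).1‖) MeasureTheory.volume 0 1 :=
    (continuous_norm.comp_continuousOn hxcont).intervalIntegrable_of_Icc h01
  have habsint : IntervalIntegrable (fun τ => |(γ' τ).2|) MeasureTheory.volume 0 1 :=
    (continuous_abs.comp_continuousOn htcont).intervalIntegrable_of_Icc h01
  -- fundamental theorem of calculus
  have hFTCx : ∫ τ in (0 : ℝ)..1, (γ' τ).1 = (γ 1).1 - (γ 0).1 := by
    apply intervalIntegral.integral_eq_sub_of_hasDerivAt (f := fun s => (γ s).1) _ hxint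
    intro τ hτ
    rw [uIcc_of_le h01] at hτ
    exact hx' τ hτ
  have hFTCt : ∫ τ in (0 : ℝ)..1, (γ' τ).2 = (γ 1).2 - (γ 0).2 := by
    apply intervalIntegral.integral_eq_sub_of_hasDerivAt (f := fun s => (γ s).2) _ htint
    intro τ hτ
    rw [uIcc_of_le h01] at hτ
    exact ht' τ hτ
  -- the key causal inequality between the endpoints
  have hnormx : ‖(γ 1).1 - (γ 0).1‖ ≤ ∫ τ in (0 : ℝ)..1, |(γ' τ).2| := by
    rw [← hFTCx]
    refine (intervalIntegral.norm_integral_le_integral_norm h01).trans ?_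
    exact intervalIntegral.integral_mono_on h01 hnormint habsint (fun τ hτ => hcausal τ hτ)
  have habs : ∫ τ in (0 : ℝ)..1, |(γ' τ).2| = |(γ 1).2 - (γ 0).2| := by
    rcases hsign with hpos | hneg
    · have hEq : EqOn (fun τ => |(γ' τ).2|) (fun τ => (γ' τ).2) (uIcc (0 : ℝ) 1) := by
        intro τ hτ
        rw [uIcc_of_le h01] at hτ
        exact abs_of_pos (hpos τ hτ)
      rw [intervalIntegral.integral_congr hEq, hFTCt]
      have : 0 ≤ (γ 1).2 - (γ 0).2 := by
        rw [← hFTCt]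
        exact intervalIntegral.integral_nonneg h01 (fun τ hτ => (hpos τ hτ).le)
      rw [abs_of_nonneg this]
    · have hEq : EqOn (fun τ => |(γ' τ).2|) (fun τ => -(γ' τ).2) (uIcc (0 : ℝ) 1) := by
        intro τ hτ
        rw [uIcc_of_le h01] at hτ
        exact abs_of_neg (hneg τ hτ)
      rw [intervalIntegral.integral_congr hEq, intervalIntegral.integral_neg, hFTCt]
      have hnn : 0 ≤ ∫ τ in (0 : ℝ)..1, -(γ' τ).2 :=
        intervalIntegral.integral_nonneg h01 (fun τ hτ => neg_nonneg.mpr (hneg τ hτ).le)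
      rw [intervalIntegral.integral_neg, hFTCt] at hnn
      have hle : (γ 1).2 - (γ 0).2 ≤ 0 := by linarith
      rw [abs_of_nonpos hle]
  have key : ‖(γ 1).1 - (γ 0).1‖ ≤ |(γ 1).2 - (γ 0).2| := habs ▸ hnormx
  -- endpoints on the radial graph
  rw [hS] at h0 h1
  obtain ⟨u, hu, hγ0⟩ := h0
  obtain ⟨v, hv, hγ1⟩ := h1
  have hFu := hFpos u hu
  have hFv := hFpos v hv
  have hu1 : ‖u‖ = 1 := by simpa using mem_sphere_zero_iff_norm.mp hu
  have hv1 : ‖v‖ = 1 := by simpa using mem_sphere_zero_iff_norm.mp hv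
  have hnu : ‖F u • u‖ = F u := by
    rw [norm_smul, hu1, mul_one, Real.norm_eq_abs, abs_of_pos hFu]
  have hnv : ‖F v • v‖ = F v := by
    rw [norm_smul, hv1, mul_one, Real.norm_eq_abs, abs_of_pos hFv]
  rw [hγ0, hγ1] at key
  simp only at key
  -- equality in the triangle inequality forces the same ray
  have heq : ‖F v • v - F u • u‖ = |‖F v • v‖ - ‖F u • u‖| := by
    refine le_antisymm ?_ (abs_norm_sub_norm_le _ _)
    rw [hnu, hnv]
    exact key
  have hune0 : F u • u ≠ 0 := by
    intro h
    rw [h, norm_zero] at hnu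
    exact hFu.ne hnu
  have hvne0 : F v • v ≠ 0 := by
    intro h
    rw [h, norm_zero] at hnv
    exact hFv.ne hnv
  have hray : SameRay ℝ (F v • v) (F u • u) := sameRay_iff_norm_sub.mpr heq
  have hinv := hray.inv_norm_smul_eq hvne0 hune0
  rw [hnu, hnv, smul_smul, smul_smul, inv_mul_cancel₀ hFv.ne', inv_mul_cancel₀ hFu.ne',
    one_smul, one_smul] at hinv
  rw [hγ0, hγ1, hinv]
end

section
/- Let x : [0,1] → ℝ³ be a continuously differentiable path with x(τ) ≠ 0 for all τ ∈ [0,1], and let t : [0,1] → ℝ be continuously differentiable. Suppose ‖x′(τ)‖ ≤ t′(τ) for all τ ∈ [0,1], ‖x(0)‖ = t(0), and ‖x(1)‖ = t(1). Then for every τ ∈ [0,1] one has ‖x′(τ)‖ = t′(τ) and the Cauchy–Schwarz equality ⟨x(τ), x′(τ)⟩ = ‖x(τ)‖ · ‖x′(τ)‖; in particular x′(τ) and x(τ) are linearly dependent for every τ. -/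
/-!
Write `r = ‖x‖`. Away from the origin `r' = ⟪x, x'⟫ / ‖x‖ ≤ ‖x'‖ ≤ t'`, so `t - r` is
nondecreasing on `[0,1]`; it vanishes at both ends, hence identically, and so do its
derivatives. This squeezes `⟪x, x'⟫ / ‖x‖ = ‖x'‖ = t'`, the equality case of Cauchy–Schwarz.
-/

open Set
open scoped InnerProductSpace

section InnerProductSpace

variable {E : Type*} [NormedAddCommGroup E] [InnerProductSpace ℝ E]

theorem HasDerivAt.norm {x : ℝ → E} {v : E} {τ : ℝ} (hx : HasDerivAt x v τ)
    (hne : x τ ≠ 0) : HasDerivAt (fun s => ‖x s‖) (⟪x τ, v⟫_ℝ / ‖x τ‖) τ := by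
  have hsq : ‖x τ‖ ^ 2 ≠ 0 := pow_ne_zero _ (norm_ne_zero_iff.mpr hne)
  have hsqrt := (Real.hasDerivAt_sqrt hsq).comp τ hx.norm_sq
  simp only [Function.comp_def, Real.sqrt_sq (norm_nonneg _)] at hsqrt
  exact hsqrt.congr_deriv (by ring)

theorem real_inner_div_norm_le_norm (v w : E) : ⟪v, w⟫_ℝ / ‖v‖ ≤ ‖w‖ :=
  div_le_of_le_mul₀ (norm_nonneg v) (norm_nonneg w)
    ((real_inner_le_norm v w).trans_eq (mul_comm _ _))

theorem exists_smul_of_real_inner_eq_norm_mul {v w : E} (hv : v ≠ 0)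
    (h : ⟪v, w⟫_ℝ = ‖v‖ * ‖w‖) : ∃ c : ℝ, w = c • v := by
  have hv' : ‖v‖ ≠ 0 := norm_ne_zero_iff.mpr hv
  refine ⟨‖w‖ / ‖v‖, ?_⟩
  rw [div_eq_inv_mul, mul_smul, inner_eq_norm_mul_iff_real.mp h, smul_smul,
    inv_mul_cancel₀ hv', one_smul]

end InnerProductSpace

theorem MonotoneOn.eq_left_of_eq_right {α β : Type*} [Preorder α] [PartialOrder β]
    {f : α → β} {a b τ : α} (hf : MonotoneOn f (Icc a b)) (hab : f a = f b)
    (hτ : τ ∈ Icc a b) : f τ = f a :=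
  le_antisymm (hab ▸ hf hτ (right_mem_Icc.mpr (hτ.1.trans hτ.2)) hτ.2)
    (hf (left_mem_Icc.mpr (hτ.1.trans hτ.2)) hτ hτ.1)

theorem HasDerivAt.eq_zero_of_eqOn_const {F : Type*} [NormedAddCommGroup F] [NormedSpace ℝ F]
    {f : ℝ → F} {f' c : F} {a b τ : ℝ} (hab : a < b) (hf : HasDerivAt f f' τ)
    (hc : EqOn f (fun _ => c) (Icc a b)) (hτ : τ ∈ Icc a b) : f' = 0 :=
  (uniqueDiffOn_Icc hab τ hτ).eq_deriv _ hf.hasDerivWithinAt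
    ((hasDerivWithinAt_const τ _ c).congr hc (hc hτ))

theorem deriv_eq_of_deriv_le_of_eq_endpoints {g h g' h' : ℝ → ℝ} {a b : ℝ} (hab : a < b)
    (hg : ∀ τ ∈ Icc a b, HasDerivAt g (g' τ) τ) (hh : ∀ τ ∈ Icc a b, HasDerivAt h (h' τ) τ)
    (hle : ∀ τ ∈ Icc a b, g' τ ≤ h' τ) (ha : g a = h a) (hb : g b = h b) :
    ∀ τ ∈ Icc a b, g' τ = h' τ := by
  have hgap : ∀ τ ∈ Icc a b, HasDerivAt (fun s => h s - g s) (h' τ - g' τ) τ :=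
    fun τ hτ => (hh τ hτ).sub (hg τ hτ)
  have hmono : MonotoneOn (fun s => h s - g s) (Icc a b) := by
    refine monotoneOn_of_hasDerivWithinAt_nonneg (convex_Icc a b)
      (fun τ hτ => (hgap τ hτ).continuousAt.continuousWithinAt)
      (fun τ hτ => (hgap τ (interior_subset hτ)).hasDerivWithinAt) ?_
    exact fun τ hτ => sub_nonneg.mpr (hle τ (interior_subset hτ))
  have hzero : EqOn (fun s => h s - g s) (fun _ => 0) (Icc a b) := fun τ hτ =>
    (hmono.eq_left_of_eq_right (by simp [ha, hb]) hτ).trans (sub_eq_zero.mpr ha.symm)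
  intro τ hτ
  exact (sub_eq_zero.mp ((hgap τ hτ).eq_zero_of_eqOn_const hab hzero hτ)).symm

theorem causal_path_on_cone_saturates_general
    (x x' : ℝ → EuclideanSpace ℝ (Fin 3)) (t t' : ℝ → ℝ)
    (hx : ∀ τ ∈ Icc (0 : ℝ) 1, HasDerivAt x (x' τ) τ)
    (ht : ∀ τ ∈ Icc (0 : ℝ) 1, HasDerivAt t (t' τ) τ)
    (hne : ∀ τ ∈ Icc (0 : ℝ) 1, x τ ≠ 0)
    (hle : ∀ τ ∈ Icc (0 : ℝ) 1, ‖x' τ‖ ≤ t' τ)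
    (h0 : ‖x 0‖ = t 0) (h1 : ‖x 1‖ = t 1) :
    ∀ τ ∈ Icc (0 : ℝ) 1,
      ‖x' τ‖ = t' τ ∧
      (inner ℝ (x τ) (x' τ) : ℝ) = ‖x τ‖ * ‖x' τ‖ ∧
      ∃ c : ℝ, x' τ = c • x τ := by
  have hr_le τ : inner ℝ (x τ) (x' τ) / ‖x τ‖ ≤ ‖x' τ‖ := real_inner_div_norm_le_norm _ _
  have hr_eq := deriv_eq_of_deriv_le_of_eq_endpoints zero_lt_one
    (fun τ hτ => (hx τ hτ).norm (hne τ hτ)) ht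
    (fun τ hτ => (hr_le τ).trans (hle τ hτ)) h0 h1
  intro τ hτ
  have hnorm : ‖x' τ‖ = t' τ := le_antisymm (hle τ hτ) ((hr_eq τ hτ).symm.trans_le (hr_le τ))
  have hinner : inner ℝ (x τ) (x' τ) = ‖x τ‖ * ‖x' τ‖ := by
    rw [mul_comm, ← div_eq_iff (norm_ne_zero_iff.mpr (hne τ hτ)), hr_eq τ hτ, hnorm]
  exact ⟨hnorm, hinner, exists_smul_of_real_inner_eq_norm_mul (hne τ hτ) hinner⟩

/-- Equality-forcing step: if `x : [0,1] → ℝ³` is a nonvanishing C¹ path,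
`t : [0,1] → ℝ` is C¹, `‖x'‖ ≤ t'` on `[0,1]` and `‖x(0)‖ = t(0)`,
`‖x(1)‖ = t(1)`, then `‖x'(τ)‖ = t'(τ)` and Cauchy–Schwarz equality
`⟨x(τ), x'(τ)⟩ = ‖x(τ)‖‖x'(τ)‖` hold for all `τ`; in particular `x'(τ)` and
`x(τ)` are linearly dependent for every `τ`. -/
theorem causal_path_on_cone_saturates
    (x x' : ℝ → EuclideanSpace ℝ (Fin 3)) (t t' : ℝ → ℝ)
    (hx : ∀ τ ∈ Icc (0 : ℝ) 1, HasDerivAt x (x' τ) τ)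
    (hx' : ContinuousOn x' (Icc 0 1))
    (ht : ∀ τ ∈ Icc (0 : ℝ) 1, HasDerivAt t (t' τ) τ)
    (ht' : ContinuousOn t' (Icc 0 1))
    (hne : ∀ τ ∈ Icc (0 : ℝ) 1, x τ ≠ 0)
    (hle : ∀ τ ∈ Icc (0 : ℝ) 1, ‖x' τ‖ ≤ t' τ)
    (h0 : ‖x 0‖ = t 0) (h1 : ‖x 1‖ = t 1) :
    ∀ τ ∈ Icc (0 : ℝ) 1,
      ‖x' τ‖ = t' τ ∧
      (inner ℝ (x τ) (x' τ) : ℝ) = ‖x τ‖ * ‖x' τ‖ ∧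
      ∃ c : ℝ, x' τ = c • x τ :=
  causal_path_on_cone_saturates_general x x' t t' hx ht hne hle h0 h1
end

section
/- Let E be a real inner product space and let x : [0,1] → E be a continuously differentiable path with x(τ) ≠ 0 for all τ ∈ [0,1]. Suppose that for every τ ∈ [0,1] the vectors x(τ) and x′(τ) are linearly dependent (equivalently, x′(τ) ∈ span{x(τ)}). Then x(1) = a · x(0) for some real number a > 0; that is, the whole path lies on a single open ray from the origin. -/
/-!
The direction `‖x‖⁻¹ • x` of a nonvanishing path has derivative `‖x‖⁻¹ • (x' - (⟪x, x'⟫ / ‖x‖²) • x)`,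
the part of the velocity orthogonal to the position. A radial velocity makes it vanish, so the
direction is constant along the path and the two endpoints differ by the positive factor
`‖x 1‖ / ‖x 0‖`.
-/

open Set RealInnerProductSpace

section

variable {E : Type*} [NormedAddCommGroup E] [InnerProductSpace ℝ E]

theorem HasDerivAt.norm_s3 {f : ℝ → E} {f' : E} {t : ℝ} (hf : HasDerivAt f f' t) (h0 : f t ≠ 0) :
    HasDerivAt (‖f ·‖) (⟪f t, f'⟫ / ‖f t‖) t := by
  have hsq : 0 < ‖f t‖ ^ 2 := by positivity
  convert hf.norm_sq.sqrt hsq.ne' using 1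
  · simp only [Real.sqrt_sq (norm_nonneg _)]
  · rw [Real.sqrt_sq (norm_nonneg _)]; ring

theorem hasDerivAt_inv_norm_smul_of_mem_span {x : ℝ → E} {v : E} {t : ℝ}
    (hx : HasDerivAt x v t) (hne : x t ≠ 0) (hspan : v ∈ Submodule.span ℝ {x t}) :
    HasDerivAt (fun s => ‖x s‖⁻¹ • x s) 0 t := by
  obtain ⟨k, rfl⟩ := Submodule.mem_span_singleton.mp hspan
  have hnorm : ‖x t‖ ≠ 0 := norm_ne_zero_iff.mpr hne
  convert ((hx.norm_s3 hne).inv hnorm).smul hx using 1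
  · rfl
  have hcoeff : ‖x t‖⁻¹ * k + -(k * ‖x t‖ ^ 2 / ‖x t‖) / ‖x t‖ ^ 2 = 0 := by
    field_simp
    ring
  rw [real_inner_smul_right, real_inner_self_eq_norm_sq, smul_smul, ← add_smul, Pi.inv_apply,
    hcoeff, zero_smul]

theorem inv_norm_smul_eq_of_hasDerivAt_mem_span {x x' : ℝ → E} {a b : ℝ}
    (hx : ∀ t ∈ Icc a b, HasDerivAt x (x' t) t) (hne : ∀ t ∈ Icc a b, x t ≠ 0)
    (hspan : ∀ t ∈ Icc a b, x' t ∈ Submodule.span ℝ {x t}) :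
    ∀ t ∈ Icc a b, ‖x t‖⁻¹ • x t = ‖x a‖⁻¹ • x a := by
  have hderiv t (ht : t ∈ Icc a b) : HasDerivAt (fun s => ‖x s‖⁻¹ • x s) 0 t :=
    hasDerivAt_inv_norm_smul_of_mem_span (hx t ht) (hne t ht) (hspan t ht)
  exact constant_of_has_deriv_right_zero
    (fun t ht => (hderiv t ht).continuousAt.continuousWithinAt)
    (fun t ht => (hderiv t (Ico_subset_Icc_self ht)).hasDerivWithinAt)

end

theorem endpoint_pos_multiple_of_radial_velocity_general
    {E : Type*} [NormedAddCommGroup E] [InnerProductSpace ℝ E]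
    (x x' : ℝ → E)
    (hx : ∀ τ ∈ Icc (0 : ℝ) 1, HasDerivAt x (x' τ) τ)
    (hne : ∀ τ ∈ Icc (0 : ℝ) 1, x τ ≠ 0)
    (hspan : ∀ τ ∈ Icc (0 : ℝ) 1, x' τ ∈ Submodule.span ℝ {x τ}) :
    ∃ a : ℝ, 0 < a ∧ x 1 = a • x 0 := by
  have h1 : (1 : ℝ) ∈ Icc 0 1 := right_mem_Icc.mpr zero_le_one
  have hdir := inv_norm_smul_eq_of_hasDerivAt_mem_span hx hne hspan 1 h1
  have h0 : (0 : ℝ) ∈ Icc 0 1 := left_mem_Icc.mpr zero_le_one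
  refine ⟨‖x 1‖ * ‖x 0‖⁻¹, by simp [hne 1 h1, hne 0 h0], ?_⟩
  rw [mul_smul, ← hdir, smul_inv_smul₀ (norm_ne_zero_iff.mpr (hne 1 h1))]

/-- If `x : [0,1] → E` is a nonvanishing C¹ path in a real inner product space
whose velocity `x'(τ)` always lies in the span of `x(τ)`, then the endpoint
`x(1)` is a positive multiple of `x(0)`: the path lies on a single open ray. -/
theorem endpoint_pos_multiple_of_radial_velocity
    {E : Type*} [NormedAddCommGroup E] [InnerProductSpace ℝ E]
    (x x' : ℝ → E)
    (hx : ∀ τ ∈ Icc (0 : ℝ) 1, HasDerivAt x (x' τ) τ)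
    (hx' : ContinuousOn x' (Icc 0 1))
    (hne : ∀ τ ∈ Icc (0 : ℝ) 1, x τ ≠ 0)
    (hspan : ∀ τ ∈ Icc (0 : ℝ) 1, x' τ ∈ Submodule.span ℝ {x τ}) :
    ∃ a : ℝ, 0 < a ∧ x 1 = a • x 0 :=
  endpoint_pos_multiple_of_radial_velocity_general x x' hx hne hspan
end

section
/- Let m > 0 and 0 < r < m/2 be real numbers. Define H(r) = (1 − m/(2r))^{-2} · ( 2/r + (4/(1 − m/(2r))) · (m/(2r²)) ) and H₀(r) = (1 − m/(2r))^{-2} · (2/r). Then H(r) < 0 and |H(r)| − H₀(r) = −4 / ( r · (1 − m/(2r))³ ) > 0. -/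
/-- In the negative-mass Schwarzschild metric `(1 - m/(2r))⁴ g_e` on
`{0 < r < m/2}`, the mean curvature `H(r)` of the coordinate sphere `S_r`
is negative, and `|H(r)| - H₀(r) = -4/(r(1 - m/(2r))³) > 0`, where `H₀(r)`
is the mean curvature of `S_r` isometrically embedded in Euclidean `ℝ³`. -/
theorem negative_mass_schwarzschild_mean_curvature
    (m r : ℝ) (hm : 0 < m) (hr : 0 < r) (hrm : r < m / 2)
    (H H₀ : ℝ)
    (hH : H = ((1 - m / (2 * r)) ^ 2)⁻¹ *
        (2 / r + 4 / (1 - m / (2 * r)) * (m / (2 * r ^ 2))))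
    (hH₀ : H₀ = ((1 - m / (2 * r)) ^ 2)⁻¹ * (2 / r)) :
    H < 0 ∧ |H| - H₀ = -4 / (r * (1 - m / (2 * r)) ^ 3) ∧
      0 < -4 / (r * (1 - m / (2 * r)) ^ 3) := by
  have hrne : r ≠ 0 := ne_of_gt hr
  set u := 1 - m / (2 * r) with hu_def
  have hu : u < 0 := by
    rw [hu_def, sub_neg, lt_div_iff₀ (by linarith : (0:ℝ) < 2 * r)]; linarith
  have hune : u ≠ 0 := ne_of_lt hu
  have hu3 : u ^ 3 < 0 := Odd.pow_neg ⟨1, by norm_num⟩ hu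
  have hm2 : m / (2 * r ^ 2) = (1 - u) / r := by
    rw [hu_def, sub_sub_cancel, div_div]; ring_nf
  rw [hm2] at hH
  have hHval : H = (2 * u + 4 * (1 - u)) / (u ^ 3 * r) := by
    rw [hH]; field_simp
  have hHneg : H < 0 := by
    rw [hHval]
    apply div_neg_of_pos_of_neg (by linarith)
    exact mul_neg_of_neg_of_pos hu3 hr
  refine ⟨hHneg, ?_, ?_⟩
  · rw [abs_of_neg hHneg, hHval, hH₀]
    field_simp
    ring
  · apply div_pos_of_neg_of_neg (by norm_num)
    exact mul_neg_of_pos_of_neg hr hu3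
end
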